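/- Let α ∈ (0,1) and ν ∈ ℕ with 2ν > 1/(1-α). Then K_{α,ν} is nowhere differentiable: for every x ∈ ℝ, the limit lim_{t→0} (K_{α,ν}(x+t) - K_{α,ν}(x))/t does not exist (indeed the difference quotients are unbounded as t → 0). -/

import Mathlib

/-- The sawtooth function: φ(x) = |x| on [-1,1], extended 2-periodically. -/
noncomputable def phi (x : ℝ) : ℝ := |x - 2 * round (x / 2)|

/-- The Knopp-type function K_{α,ν}. -/
noncomputable def Kfun (α : ℝ) (ν : ℕ) (x : ℝ) : ℝ :=
  ∑' k : ℕ, (2 : ℝ) ^ (-(2 * α * (ν : ℝ) * (k : ℝ))) * phi ((2 : ℝ) ^ (2 * ν * k) * x)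

/-! With `a = 2^(-2αν)` and `b = 4^ν`, `K = ∑ aᵏ φ(bᵏ x)` and the hypothesis says exactly
`ab > 2`. Take `t = ±1/(2bⁿ)`, the sign chosen so that `φ` is affine between `bⁿx` and
`bⁿ(x + t)`. The terms `k > n` do not move, since `bᵏt` is an even integer; the term `n` moves
by `aⁿ/2`; the terms `k < n` move by at most `(ab)ᵏ|t|` since `φ` is 1-Lipschitz. Hence
`|ΔK / t| ≥ (ab)ⁿ - (ab)ⁿ/(ab - 1) = (ab)ⁿ (ab - 2)/(ab - 1) → ∞`. -/

open Filter Topology Finset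

lemma phi_eq_two_mul_abs (x : ℝ) : phi x = 2 * |x / 2 - round (x / 2)| := by
  rw [phi, ← abs_two, ← abs_mul]
  ring_nf

lemma phi_nonneg (x : ℝ) : 0 ≤ phi x := abs_nonneg _

lemma phi_le_one (x : ℝ) : phi x ≤ 1 := by
  linarith [phi_eq_two_mul_abs x, abs_sub_round (x / 2)]

lemma phi_le_abs_sub (x : ℝ) (m : ℤ) : phi x ≤ |x - 2 * m| := by
  rw [phi_eq_two_mul_abs, show x - 2 * m = 2 * (x / 2 - m) by ring, abs_mul, abs_two]
  exact mul_le_mul_of_nonneg_left (round_le _ m) zero_le_two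

lemma phi_eq_abs_sub_of_abs_le (j : ℤ) {y : ℝ} (hy : |y - 2 * j| ≤ 1) :
    phi y = |y - 2 * j| := by
  refine le_antisymm (phi_le_abs_sub y j) ?_
  rcases eq_or_ne (round (y / 2)) j with hr | hr
  · rw [phi, hr]
  · have h1 : (1 : ℝ) ≤ |(round (y / 2) : ℝ) - j| := by
      exact_mod_cast Int.one_le_abs (sub_ne_zero.2 hr)
    have h2 : 2 * |(round (y / 2) : ℝ) - j| ≤ |y - 2 * j| + phi y := by
      calc 2 * |(round (y / 2) : ℝ) - j| = |(y - 2 * j) - (y - 2 * round (y / 2))| := by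
            rw [← abs_two, ← abs_mul]; ring_nf
        _ ≤ |y - 2 * j| + phi y := abs_sub _ _
    linarith

lemma phi_periodic : Function.Periodic phi 2 := fun x => by
  rw [phi, phi, add_div, div_self two_ne_zero, round_add_one]
  push_cast
  ring_nf

lemma phi_lipschitzWith : LipschitzWith 1 phi := LipschitzWith.of_le_add fun x y => by
  calc phi x ≤ |x - 2 * round (y / 2)| := phi_le_abs_sub x _
    _ ≤ |y - 2 * round (y / 2)| + |x - y| := by
      rw [add_comm]; exact abs_sub_le x y _
    _ = phi y + dist x y := rfl

lemma abs_phi_sub_phi_of_mem_Icc (m : ℤ) {u v : ℝ} (hu : u ∈ Set.Icc (m : ℝ) (m + 1))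
    (hv : v ∈ Set.Icc (m : ℝ) (m + 1)) : |phi u - phi v| = |u - v| := by
  obtain ⟨hu1, hu2⟩ := hu
  obtain ⟨hv1, hv2⟩ := hv
  rcases Int.even_or_odd' m with ⟨j, rfl | rfl⟩ <;> push_cast at *
  · rw [phi_eq_abs_sub_of_abs_le j (abs_le.2 ⟨by linarith, by linarith⟩),
      phi_eq_abs_sub_of_abs_le j (abs_le.2 ⟨by linarith, by linarith⟩),
      abs_of_nonneg (by linarith : 0 ≤ u - 2 * j), abs_of_nonneg (by linarith : 0 ≤ v - 2 * j)]
    ring_nf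
  · have hu' : |u - 2 * (j + 1 : ℤ)| ≤ 1 := by push_cast; exact abs_le.2 ⟨by linarith, by linarith⟩
    have hv' : |v - 2 * (j + 1 : ℤ)| ≤ 1 := by push_cast; exact abs_le.2 ⟨by linarith, by linarith⟩
    rw [phi_eq_abs_sub_of_abs_le _ hu', phi_eq_abs_sub_of_abs_le _ hv']
    push_cast
    rw [abs_of_nonpos (by linarith : u - 2 * (j + 1) ≤ 0),
      abs_of_nonpos (by linarith : v - 2 * (j + 1) ≤ 0), ← abs_neg]
    ring_nf

lemma exists_abs_phi_add_half_sub_phi (u : ℝ) :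
    ∃ ε : ℤ, |(ε : ℝ)| = 1 ∧ |phi (u + ε / 2) - phi u| = 1 / 2 := by
  have hu1 : (⌊u⌋ : ℝ) ≤ u := Int.floor_le u
  have hu2 : u < ⌊u⌋ + 1 := Int.lt_floor_add_one u
  by_cases h : u + 1 / 2 ≤ ⌊u⌋ + 1
  · refine ⟨1, by norm_num, ?_⟩
    rw [abs_phi_sub_phi_of_mem_Icc ⌊u⌋ ⟨by push_cast; linarith, by push_cast; linarith⟩
      ⟨hu1, hu2.le⟩]
    norm_num
  · refine ⟨-1, by norm_num, ?_⟩
    rw [abs_phi_sub_phi_of_mem_Icc ⌊u⌋ ⟨by push_cast; linarith, by push_cast; linarith⟩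
      ⟨hu1, hu2.le⟩]
    norm_num

noncomputable def knoppSeries (a : ℝ) (b : ℕ) (x : ℝ) : ℝ := ∑' k : ℕ, a ^ k * phi (b ^ k * x)

lemma Kfun_eq_knoppSeries (α : ℝ) (ν : ℕ) :
    Kfun α ν = knoppSeries ((2 : ℝ) ^ (-(2 * α * ν))) (4 ^ ν) := by
  funext x
  unfold Kfun knoppSeries
  congr 1
  funext k
  rw [← Real.rpow_natCast ((2 : ℝ) ^ (-(2 * α * ν))) k, ← Real.rpow_mul zero_le_two]
  push_cast
  rw [show (4 : ℝ) = 2 ^ 2 by norm_num, ← pow_mul, ← pow_mul]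
  ring_nf

section
variable {a : ℝ} {b : ℕ}

lemma summable_pow_mul_phi (ha0 : 0 ≤ a) (ha1 : a < 1) (x : ℝ) :
    Summable fun k : ℕ => a ^ k * phi (b ^ k * x) :=
  (summable_geometric_of_lt_one ha0 ha1).of_nonneg_of_le
    (fun k => mul_nonneg (pow_nonneg ha0 k) (phi_nonneg _))
    (fun k => mul_le_of_le_one_right (pow_nonneg ha0 k) (phi_le_one _))

lemma exists_pow_mul_div_eq_int_mul_two (hb : 4 ∣ b) (ε : ℤ) {n k : ℕ} (hnk : n < k) :
    ∃ m : ℤ, (b : ℝ) ^ k * (ε / (2 * b ^ n)) = m * 2 := by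
  obtain ⟨c, rfl⟩ := hb
  obtain ⟨j, rfl⟩ := Nat.exists_eq_add_of_lt hnk
  rcases eq_or_ne c 0 with rfl | hc
  · exact ⟨0, by simp⟩
  · refine ⟨ε * (4 * c) ^ j * c, ?_⟩
    push_cast
    field_simp
    ring

lemma knoppSeries_add_sub_eq_sum (ha0 : 0 ≤ a) (ha1 : a < 1) (hb : 4 ∣ b) (x : ℝ) (ε : ℤ)
    (n : ℕ) :
    knoppSeries a b (x + ε / (2 * b ^ n)) - knoppSeries a b x =
      ∑ k ∈ range (n + 1), a ^ k * (phi (b ^ k * (x + ε / (2 * b ^ n))) - phi (b ^ k * x)) := by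
  rw [knoppSeries, knoppSeries,
    ← (summable_pow_mul_phi ha0 ha1 _).tsum_sub (summable_pow_mul_phi ha0 ha1 _)]
  simp_rw [← mul_sub]
  refine tsum_eq_sum fun k hk => ?_
  obtain ⟨m, hm⟩ := exists_pow_mul_div_eq_int_mul_two hb ε (by simpa using hk : n < k)
  rw [mul_add, hm, phi_periodic.int_mul m, sub_self, mul_zero]

lemma abs_pow_mul_phi_sub_le (ha0 : 0 ≤ a) (k : ℕ) (x t : ℝ) :
    |a ^ k * (phi (b ^ k * (x + t)) - phi (b ^ k * x))| ≤ (a * b) ^ k * |t| := by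
  have h := phi_lipschitzWith.dist_le_mul (b ^ k * (x + t)) (b ^ k * x)
  rw [Real.dist_eq, Real.dist_eq, NNReal.coe_one, one_mul, ← mul_sub, add_sub_cancel_left,
    abs_mul, abs_pow, Nat.abs_cast] at h
  rw [abs_mul, abs_of_nonneg (pow_nonneg ha0 k), mul_pow, mul_assoc]
  exact mul_le_mul_of_nonneg_left h (pow_nonneg ha0 k)

lemma exists_abs_knoppSeries_slope_ge (ha0 : 0 ≤ a) (ha1 : a < 1) (hb : 4 ∣ b)
    (hab : 1 < a * b) (x : ℝ) (n : ℕ) :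
    ∃ ε : ℤ, |(ε : ℝ)| = 1 ∧ (a * b) ^ n * ((a * b - 2) / (a * b - 1)) ≤
      |(knoppSeries a b (x + ε / (2 * b ^ n)) - knoppSeries a b x) / (ε / (2 * b ^ n))| := by
  obtain ⟨ε, hε, hstep⟩ := exists_abs_phi_add_half_sub_phi (b ^ n * x)
  refine ⟨ε, hε, ?_⟩
  rw [knoppSeries_add_sub_eq_sum ha0 ha1 hb, sum_range_succ]
  set t : ℝ := ε / (2 * b ^ n)
  have hb0 : (0 : ℝ) < b := by
    by_contra! h
    nlinarith [b.cast_nonneg (α := ℝ)]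
  have ht : |t| = 1 / (2 * b ^ n) := by rw [abs_div, hε, abs_of_pos (by positivity)]
  have hlast : |a ^ n * (phi (b ^ n * (x + t)) - phi (b ^ n * x))| = a ^ n / 2 := by
    rw [mul_add, show (b : ℝ) ^ n * t = ε / 2 by simp only [t]; field_simp, abs_mul, hstep,
      abs_of_nonneg (pow_nonneg ha0 n)]
    ring
  set head := ∑ k ∈ range n, a ^ k * (phi (b ^ k * (x + t)) - phi (b ^ k * x))
  set last := a ^ n * (phi (b ^ n * (x + t)) - phi (b ^ n * x))
  have hhead : |head| ≤ (a * b) ^ n / (a * b - 1) * |t| :=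
    calc |head| ≤ ∑ k ∈ range n, (a * b) ^ k * |t| :=
          (abs_sum_le_sum_abs _ _).trans (sum_le_sum fun k _ => abs_pow_mul_phi_sub_le ha0 k x t)
      _ = ((a * b) ^ n - 1) / (a * b - 1) * |t| := by rw [← sum_mul, geom_sum_eq hab.ne' n]
      _ ≤ (a * b) ^ n / (a * b - 1) * |t| := by gcongr; linarith
  have htri : |last| ≤ |head + last| + |head| := by
    simpa only [add_sub_cancel_left] using abs_sub (head + last) head
  have hbound : (a * b) ^ n * ((a * b - 2) / (a * b - 1)) * |t| =
      a ^ n / 2 - (a * b) ^ n / (a * b - 1) * |t| := by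
    have : a * b - 1 ≠ 0 := sub_ne_zero.2 hab.ne'
    rw [ht, mul_pow]
    field_simp
    ring
  rw [abs_div, le_div_iff₀ (by rw [ht]; positivity), hbound]
  linarith

lemma knoppSeries_slope_unbounded (ha0 : 0 ≤ a) (ha1 : a < 1) (hb : 4 ∣ b) (hab : 2 < a * b)
    (x C r : ℝ) (hr : 0 < r) :
    ∃ t : ℝ, t ≠ 0 ∧ |t| < r ∧ C < |(knoppSeries a b (x + t) - knoppSeries a b x) / t| := by
  have hb1 : (1 : ℝ) < b := by nlinarith
  have hc : 0 < (a * b - 2) / (a * b - 1) := div_pos (by linarith) (by linarith)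
  obtain ⟨n, hnC, hnr⟩ :=
    (((tendsto_pow_atTop_atTop_of_one_lt (by linarith : 1 < a * b)).eventually_gt_atTop
      (C / ((a * b - 2) / (a * b - 1)))).and
    ((tendsto_pow_atTop_atTop_of_one_lt hb1).eventually_gt_atTop (1 / (2 * r)))).exists
  obtain ⟨ε, hε, hslope⟩ := exists_abs_knoppSeries_slope_ge ha0 ha1 hb (by linarith) x n
  have hbn : (0 : ℝ) < b ^ n := by positivity
  refine ⟨ε / (2 * b ^ n), div_ne_zero (abs_pos.1 (by rw [hε]; exact one_pos)) (by positivity),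
    ?_, ?_⟩
  · rw [abs_div, hε, abs_of_pos (by positivity), div_lt_iff₀ (by positivity)]
    rw [div_lt_iff₀ (by positivity)] at hnr
    linarith
  · rw [div_lt_iff₀ hc] at hnC
    linarith

end

lemma not_tendsto_nhdsNE_of_forall_exists_lt_abs {g : ℝ → ℝ}
    (h : ∀ C r : ℝ, 0 < r → ∃ t, t ≠ 0 ∧ |t| < r ∧ C < |g t|) (L : ℝ) :
    ¬ Tendsto g (𝓝[≠] 0) (𝓝 L) := fun hL => by
  obtain ⟨δ, hδ, hball⟩ := Metric.mem_nhdsWithin_iff.1 (hL.abs (Iio_mem_nhds (lt_add_one |L|)))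
  obtain ⟨t, ht0, htδ, hbig⟩ := h (|L| + 1) δ hδ
  exact (hball ⟨mem_ball_zero_iff.2 htδ, ht0⟩ : |g t| < |L| + 1).not_gt hbig

lemma two_lt_two_rpow_neg_mul_four_pow {α : ℝ} {ν : ℕ} (h : 1 < 2 * ν * (1 - α)) :
    2 < (2 : ℝ) ^ (-(2 * α * ν)) * ((4 ^ ν : ℕ) : ℝ) := by
  have h4 : ((4 ^ ν : ℕ) : ℝ) = (2 : ℝ) ^ (2 * ν : ℝ) := by
    rw [show (2 * ν : ℝ) = ((2 * ν : ℕ) : ℝ) by push_cast; ring, Real.rpow_natCast, pow_mul]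
    norm_num
  rw [h4, ← Real.rpow_add two_pos]
  calc (2 : ℝ) = 2 ^ (1 : ℝ) := (Real.rpow_one 2).symm
    _ < _ := Real.rpow_lt_rpow_of_exponent_lt one_lt_two (by linarith)

theorem Kfun_nowhere_differentiable (α : ℝ) (ν : ℕ)
    (hα : α ∈ Set.Ioo (0 : ℝ) 1) (hν : 1 / (1 - α) < 2 * (ν : ℝ)) (x : ℝ) :
    (¬ ∃ L : ℝ, Filter.Tendsto (fun t => (Kfun α ν (x + t) - Kfun α ν x) / t)
        (nhdsWithin 0 {0}ᶜ) (nhds L))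
    ∧ ∀ C > (0 : ℝ), ∀ r > (0 : ℝ), ∃ t : ℝ, t ≠ 0 ∧ |t| < r ∧
        C < |(Kfun α ν (x + t) - Kfun α ν x) / t| := by
  obtain ⟨hα0, hα1⟩ := hα
  have hexp : 1 < 2 * ν * (1 - α) := by rwa [div_lt_iff₀ (by linarith)] at hν
  have hν0 : ν ≠ 0 := by rintro rfl; norm_num at hexp
  have hν1 : (1 : ℝ) ≤ ν := by exact_mod_cast Nat.one_le_iff_ne_zero.2 hν0
  have ha1 : (2 : ℝ) ^ (-(2 * α * ν)) < 1 :=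
    Real.rpow_lt_one_of_one_lt_of_neg one_lt_two (by nlinarith)
  have hslope := knoppSeries_slope_unbounded (by positivity) ha1 (dvd_pow_self 4 hν0)
    (two_lt_two_rpow_neg_mul_four_pow hexp) x
  rw [Kfun_eq_knoppSeries]
  exact ⟨fun ⟨L, hL⟩ => not_tendsto_nhdsNE_of_forall_exists_lt_abs hslope L hL,
    fun C _ r hr => hslope C r hr⟩
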